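/- Let M ⊆ k[y_1,...,y_n] be a monomial ideal, σ ⊆ [n], and P_σ = ⟨ y_j : j ∉ σ ⟩. Then ℕ^σ (the set of all monomials in variables y_i, i ∈ σ) is disjoint from M and forms a standard pair (i.e., is a maximal admissible pair) if and only if P_σ is a minimal prime of M. -/

import Mathlib

open MvPolynomial

/-- The set of monomials `m·ℕ^σ` (exponent vectors). -/
def pairSet {n : ℕ} (m : Fin n →₀ ℕ) (σ : Finset (Fin n)) : Set (Fin n →₀ ℕ) :=
  { x | ∃ t : Fin n →₀ ℕ, t.support ⊆ σ ∧ x = m + t }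

/-- `m·ℕ^σ` is an admissible pair of the monomial ideal `M`:
`supp m ∩ σ = ∅` and no monomial of `m·ℕ^σ` lies in `M`. -/
def AdmissiblePair (k : Type*) [Field k] {n : ℕ} (M : Ideal (MvPolynomial (Fin n) k))
    (m : Fin n →₀ ℕ) (σ : Finset (Fin n)) : Prop :=
  Disjoint m.support σ ∧ ∀ x ∈ pairSet m σ, monomial x (1 : k) ∉ M

/-- A standard pair of `M`: an inclusion-maximal admissible pair. -/
def IsStandardPair (k : Type*) [Field k] {n : ℕ} (M : Ideal (MvPolynomial (Fin n) k))
    (m : Fin n →₀ ℕ) (σ : Finset (Fin n)) : Prop :=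
  AdmissiblePair k M m σ ∧
    ∀ (m' : Fin n →₀ ℕ) (σ' : Finset (Fin n)), AdmissiblePair k M m' σ' →
      pairSet m σ ⊆ pairSet m' σ' → pairSet m σ = pairSet m' σ'

/-- The monomial prime `P_σ = ⟨ y_j : j ∉ σ ⟩`. -/
noncomputable def varPrime (k : Type*) [Field k] (n : ℕ) (σ : Finset (Fin n)) :
    Ideal (MvPolynomial (Fin n) k) :=
  Ideal.span { p | ∃ j : Fin n, j ∉ σ ∧ p = X j }

section aux

variable {k : Type*} [Field k] {n : ℕ}

lemma varPrime_eq' (σ : Finset (Fin n)) :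
    varPrime k n σ = Ideal.span (MvPolynomial.X '' {j : Fin n | j ∉ σ}) := by
  unfold varPrime
  congr 1
  ext p
  simp [eq_comm]

lemma mem_varPrime {σ : Finset (Fin n)} {p : MvPolynomial (Fin n) k} :
    p ∈ varPrime k n σ ↔ ∀ d ∈ p.support, ∃ j, j ∉ σ ∧ (d : Fin n →₀ ℕ) j ≠ 0 := by
  rw [varPrime_eq', mem_ideal_span_X_image]
  simp only [Set.mem_setOf_eq]

lemma monomial_mem_varPrime {σ : Finset (Fin n)} {d : Fin n →₀ ℕ} :
    monomial d (1 : k) ∈ varPrime k n σ ↔ ¬ d.support ⊆ σ := by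
  rw [mem_varPrime, Finset.not_subset]
  simp [support_monomial, Finsupp.mem_support_iff, and_comm]

lemma X_mem_varPrime {σ : Finset (Fin n)} {j : Fin n} :
    (X j : MvPolynomial (Fin n) k) ∈ varPrime k n σ ↔ j ∉ σ := by
  rw [X, monomial_mem_varPrime, Finsupp.support_single_ne_zero _ one_ne_zero]
  simp

lemma varPrime_le_varPrime {σ τ : Finset (Fin n)} :
    varPrime k n σ ≤ varPrime k n τ ↔ τ ⊆ σ := by
  constructor
  · intro h j hjτ
    by_contra hjσ
    exact (X_mem_varPrime.mp (h (X_mem_varPrime.mpr hjσ))) hjτ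
  · intro h
    rw [varPrime]
    apply Ideal.span_le.mpr
    rintro p ⟨j, hj, rfl⟩
    exact X_mem_varPrime.mpr fun hc => hj (h hc)

lemma varPrime_inj {σ τ : Finset (Fin n)} (h : varPrime k n σ = varPrime k n τ) : σ = τ := by
  apply Finset.Subset.antisymm
  · exact varPrime_le_varPrime.mp h.ge
  · exact varPrime_le_varPrime.mp h.le

/-- evaluation killing variables outside σ -/
noncomputable def killOut (k : Type*) [Field k] {n : ℕ} (σ : Finset (Fin n)) :
    MvPolynomial (Fin n) k →ₐ[k] MvPolynomial {i : Fin n // i ∈ σ} k :=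
  aeval (fun j => if h : j ∈ σ then X (⟨j, h⟩ : {i : Fin n // i ∈ σ}) else 0)

lemma sub_killOut_mem (σ : Finset (Fin n)) (p : MvPolynomial (Fin n) k) :
    p - rename Subtype.val (killOut k σ p) ∈ varPrime k n σ := by
  induction p using MvPolynomial.induction_on with
  | C a =>
      simp [killOut, sub_self]
  | add p q hp hq =>
      have : p + q - rename Subtype.val (killOut k σ (p + q)) =
          (p - rename Subtype.val (killOut k σ p)) +
          (q - rename Subtype.val (killOut k σ q)) := by
        simp [map_add]; ring
      rw [this]
      exact Ideal.add_mem _ hp hq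
  | mul_X p j hp =>
      by_cases h : j ∈ σ
      · have hX : killOut k σ (X j) = X (⟨j, h⟩ : {i : Fin n // i ∈ σ}) := by
          simp [killOut, aeval_X, dif_pos h]
        have : p * X j - rename Subtype.val (killOut k σ (p * X j)) =
            (p - rename Subtype.val (killOut k σ p)) * X j := by
          rw [map_mul, hX, map_mul, rename_X]
          ring
        rw [this]
        exact Ideal.mul_mem_right _ _ hp
      · have hX : killOut k σ (X j) = 0 := by
          simp [killOut, aeval_X, dif_neg h]
        have : p * X j - rename Subtype.val (killOut k σ (p * X j)) = p * X j := by
          rw [map_mul, hX, mul_zero, map_zero, sub_zero]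
        rw [this]
        exact Ideal.mul_mem_left _ _ (Ideal.subset_span ⟨j, h, rfl⟩)

lemma varPrime_eq_ker (σ : Finset (Fin n)) :
    varPrime k n σ = RingHom.ker (killOut k σ).toRingHom := by
  apply le_antisymm
  · rw [varPrime]
    apply Ideal.span_le.mpr
    rintro p ⟨j, hj, rfl⟩
    simp [RingHom.mem_ker, killOut, aeval_X, dif_neg hj]
  · intro p hp
    have h0 : killOut k σ p = 0 := hp
    have := sub_killOut_mem (k := k) σ p
    rwa [h0, map_zero, sub_zero] at this

lemma varPrime_isPrime (σ : Finset (Fin n)) : (varPrime k n σ).IsPrime := by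
  rw [varPrime_eq_ker]
  exact RingHom.ker_isPrime _

lemma mem_pairSet_zero {σ : Finset (Fin n)} {x : Fin n →₀ ℕ} :
    x ∈ pairSet (0 : Fin n →₀ ℕ) σ ↔ x.support ⊆ σ := by
  constructor
  · rintro ⟨t, ht, rfl⟩
    simpa using ht
  · intro hx
    exact ⟨x, hx, (zero_add x).symm⟩

lemma pairSet_zero_subset_iff {σ τ : Finset (Fin n)} :
    pairSet (0 : Fin n →₀ ℕ) σ ⊆ pairSet 0 τ ↔ σ ⊆ τ := by
  constructor
  · intro h i hi
    have : (Finsupp.single i 1 : Fin n →₀ ℕ) ∈ pairSet (0 : Fin n →₀ ℕ) σ := by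
      rw [mem_pairSet_zero, Finsupp.support_single_ne_zero _ one_ne_zero]
      simpa using hi
    have := mem_pairSet_zero.mp (h this)
    rw [Finsupp.support_single_ne_zero _ one_ne_zero] at this
    simpa using this
  · intro h x hx
    rw [mem_pairSet_zero] at hx ⊢
    exact hx.trans h

section M
variable {E : Set (Fin n →₀ ℕ)} {M : Ideal (MvPolynomial (Fin n) k)}
  (hM : M = Ideal.span ((fun e => monomial e (1 : k)) '' E))

include hM

lemma monomial_mem_M {t : Fin n →₀ ℕ} :
    monomial t (1 : k) ∈ M ↔ ∃ e ∈ E, e ≤ t := by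
  rw [hM, mem_ideal_span_monomial_image]
  simp [support_monomial]

lemma M_le_varPrime_iff {σ : Finset (Fin n)} :
    M ≤ varPrime k n σ ↔ ∀ e ∈ E, ¬ e.support ⊆ σ := by
  rw [hM, Ideal.span_le]
  constructor
  · intro h e he
    exact monomial_mem_varPrime.mp (h ⟨e, he, rfl⟩)
  · rintro h p ⟨e, he, rfl⟩
    exact monomial_mem_varPrime.mpr (h e he)

lemma admissible_zero_iff {σ : Finset (Fin n)} :
    AdmissiblePair k M 0 σ ↔ M ≤ varPrime k n σ := by
  rw [M_le_varPrime_iff hM]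
  constructor
  · intro ⟨_, h⟩ e he hsub
    exact h e (mem_pairSet_zero.mpr hsub) ((monomial_mem_M hM).mpr ⟨e, he, le_refl e⟩)
  · intro h
    refine ⟨by simp, fun x hx hmem => ?_⟩
    obtain ⟨e, he, hle⟩ := (monomial_mem_M hM).mp hmem
    exact h e he ((Finsupp.support_mono hle).trans (mem_pairSet_zero.mp hx))

/-- any prime over a monomial ideal contains a monomial prime over it -/
lemma exists_varPrime_le {Q : Ideal (MvPolynomial (Fin n) k)} (hQp : Q.IsPrime)
    (hMQ : M ≤ Q) : ∃ τ : Finset (Fin n), M ≤ varPrime k n τ ∧ varPrime k n τ ≤ Q := by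
  classical
  refine ⟨Finset.univ.filter (fun j => X j ∉ Q), ?_, ?_⟩
  · rw [M_le_varPrime_iff hM]
    intro e he hsub
    have hmem : monomial e (1 : k) ∈ Q := hMQ ((monomial_mem_M hM).mpr ⟨e, he, le_refl e⟩)
    have heq : monomial e (1 : k) = ∏ j ∈ e.support, X j ^ e j := by
      rw [monomial_eq, map_one, one_mul]
      rfl
    rw [heq] at hmem
    obtain ⟨j, hj, hjQ⟩ := (Ideal.IsPrime.prod_mem_iff (hp := hQp)).mp hmem
    have hjQ' : (X j : MvPolynomial (Fin n) k) ∈ Q :=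
      (hQp.pow_mem_iff_mem _ (Nat.pos_of_ne_zero (Finsupp.mem_support_iff.mp hj))).mp hjQ
    have := hsub hj
    simp only [Finset.mem_filter, Finset.mem_univ, true_and] at this
    exact this hjQ'
  · rw [varPrime]
    apply Ideal.span_le.mpr
    rintro p ⟨j, hj, rfl⟩
    simp only [Finset.mem_filter, Finset.mem_univ, true_and, not_not] at hj
    exact hj

end M

end aux

/-- For a monomial ideal `M`, `ℕ^σ` (trivial coset) is a standard pair of `M`
iff `P_σ` is a minimal prime of `M`. -/
theorem trivial_standardPair_iff_minimalPrime
    (k : Type*) [Field k] (n : ℕ) (E : Set (Fin n →₀ ℕ))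
    (M : Ideal (MvPolynomial (Fin n) k))
    (hM : M = Ideal.span ((fun e => monomial e (1 : k)) '' E))
    (σ : Finset (Fin n)) :
    IsStandardPair k M 0 σ ↔ varPrime k n σ ∈ M.minimalPrimes := by
  constructor
  · rintro ⟨hadm, hmax⟩
    refine ⟨⟨varPrime_isPrime σ, (admissible_zero_iff hM).mp hadm⟩, ?_⟩
    rintro Q ⟨hQp, hMQ⟩ hQle
    obtain ⟨τ, hMτ, hτQ⟩ := exists_varPrime_le hM hQp hMQ
    have hτσ : varPrime k n τ ≤ varPrime k n σ := hτQ.trans hQle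
    have hστ : σ ⊆ τ := varPrime_le_varPrime.mp hτσ
    have hadmτ : AdmissiblePair k M 0 τ := (admissible_zero_iff hM).mpr hMτ
    have heq := hmax 0 τ hadmτ (pairSet_zero_subset_iff.mpr hστ)
    have : τ ⊆ σ := pairSet_zero_subset_iff.mp heq.ge
    have hτσ' : τ = σ := Finset.Subset.antisymm this hστ
    rw [← hτσ']
    exact hτQ
  · rintro ⟨⟨hp, hMσ⟩, hmin⟩
    refine ⟨(admissible_zero_iff hM).mpr hMσ, ?_⟩
    rintro m' σ' hadm' hsub
    -- first, m' = 0
    have h0 : (0 : Fin n →₀ ℕ) ∈ pairSet m' σ' :=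
      hsub (mem_pairSet_zero.mpr (by simp))
    obtain ⟨t, ht, h0eq⟩ := h0
    have hm' : m' = 0 := by
      ext i
      have h := congrArg (fun f : Fin n →₀ ℕ => f i) h0eq.symm
      simp only [Finsupp.coe_zero, Pi.zero_apply, Finsupp.add_apply] at h
      simp only [Finsupp.coe_zero, Pi.zero_apply]
      omega
    subst hm'
    have hσσ' : σ ⊆ σ' := pairSet_zero_subset_iff.mp hsub
    have hMσ' : M ≤ varPrime k n σ' := (admissible_zero_iff hM).mp hadm'
    have hle : varPrime k n σ' ≤ varPrime k n σ := varPrime_le_varPrime.mpr hσσ'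
    have := hmin ⟨varPrime_isPrime σ', hMσ'⟩ hle
    have : σ = σ' := varPrime_inj (le_antisymm this hle)
    rw [this]
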